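/- arXiv:math/0510543 — 9 statements merged into one kernel-verified Lean document; each statement's English description precedes it below -/
import Mathlib

section
/- Let F be a field of characteristic zero and f : Z → F a function satisfying (k - l)·f(k + l) = (k + l)·(f(k) - f(l)) for all integers k, l. Then there exist constants a, b ∈ F such that f(k) = a·k + b·k² for all k ∈ Z. -/
/-!
The equation is linear in `f`, and `k ↦ k` and `k ↦ k ^ 2` solve it, so subtracting the
combination `a k + b k ^ 2` that agrees with `f` at `1` and `2` leaves a solution `g` vanishing
at `1` and `2`. Such a `g` vanishes identically: `l = 1` gives `(n - 1) g (n + 1) = (n + 1) g n`,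
which propagates `g = 0` upwards from `2`, and `(k, l) = (n + 1, -n)` gives
`g (n + 1) - g (-n) = (2n + 1) g 1`, which transfers it to the negative integers.
-/

def SolvesFunEq {F : Type*} [Ring F] (f : ℤ → F) : Prop :=
  ∀ k l : ℤ, ((k - l : ℤ) : F) * f (k + l) = ((k + l : ℤ) : F) * (f k - f l)

namespace SolvesFunEq

section Ring

variable {F : Type*} [Ring F] {g : ℤ → F}

theorem map_neg (hg : SolvesFunEq g) (n : ℤ) :
    g (-n) = g (n + 1) - ((2 * n + 1 : ℤ) : F) * g 1 := by
  have h := hg (n + 1) (-n)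
  rw [show n + 1 - -n = 2 * n + 1 by ring, show n + 1 + -n = 1 by ring, Int.cast_one, one_mul] at h
  rw [h]
  abel

variable [NoZeroDivisors F] [CharZero F]

theorem map_zero (hg : SolvesFunEq g) : g 0 = 0 := by
  have h := hg 1 (-1)
  norm_num at h
  exact h

theorem map_succ_eq_zero (hg : SolvesFunEq g) (h1 : g 1 = 0) {n : ℤ} (hn : 2 ≤ n)
    (hgn : g n = 0) : g (n + 1) = 0 := by
  have h := hg n 1
  rw [hgn, h1, sub_zero, mul_zero] at h
  exact (mul_eq_zero.mp h).resolve_left (Int.cast_ne_zero.mpr (by omega))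

theorem map_natCast_eq_zero (hg : SolvesFunEq g) (h1 : g 1 = 0) (h2 : g 2 = 0) (n : ℕ) :
    g n = 0 := by
  match n with
  | 0 => exact hg.map_zero
  | 1 => exact_mod_cast h1
  | n + 2 =>
    induction n with
    | zero => exact_mod_cast h2
    | succ n ih => exact_mod_cast hg.map_succ_eq_zero h1 (by omega) ih

theorem eq_zero_of_map_one_of_map_two (hg : SolvesFunEq g) (h1 : g 1 = 0) (h2 : g 2 = 0) :
    g = 0 := by
  have hnat := hg.map_natCast_eq_zero h1 h2
  funext k
  obtain ⟨n, rfl | rfl⟩ := Int.eq_nat_or_neg k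
  · exact hnat n
  · rw [hg.map_neg, h1, mul_zero, sub_zero]
    exact_mod_cast hnat (n + 1)

end Ring

theorem sub_linear_add_quadratic {F : Type*} [CommRing F] {f : ℤ → F} (hf : SolvesFunEq f)
    (a b : F) : SolvesFunEq fun k => f k - (a * k + b * (k : F) ^ 2) := by
  intro k l
  have h := hf k l
  push_cast at h ⊢
  linear_combination h

end SolvesFunEq

theorem stmt_0 {F : Type*} [Field F] [CharZero F] (f : ℤ → F)
    (hf : ∀ k l : ℤ, ((k - l : ℤ) : F) * f (k + l) = ((k + l : ℤ) : F) * (f k - f l)) :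
    ∃ a b : F, ∀ k : ℤ, f k = a * (k : F) + b * (k : F) ^ 2 := by
  set a : F := 2 * f 1 - f 2 / 2
  set b : F := f 2 / 2 - f 1
  have hg := SolvesFunEq.eq_zero_of_map_one_of_map_two
    (SolvesFunEq.sub_linear_add_quadratic hf a b) (by push_cast; ring) (by push_cast; ring)
  exact ⟨a, b, fun k => sub_eq_zero.mp (congrFun hg k)⟩
end

section
/- Let F be a field of characteristic zero and f : Z → F satisfy (k - l)·f(k + l) = (k + l)·(f(k) - f(l)) for all integers k, l. Then for every k ∈ Z, f(k) = (k/2)·(4f(1) − f(2)) + (k²/2)·(f(2) − 2f(1)). -/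
/-!
The equation is linear in `f`, and every function `k ↦ a k + b k²` solves it. Subtracting the
solution that agrees with `f` at `1` and `2` leaves a solution `h` with `h 1 = h 2 = 0`. Taking
`l = 1` gives `(n - 1) h (n + 1) = (n + 1) h n`, so `h` vanishes on the positive integers, and
taking `(k, l) = (n + 1, -n)` gives `h (-n) = h (n + 1)`, so it vanishes everywhere.
-/

section

variable {R : Type*}

def IsSolution [Ring R] (f : ℤ → R) : Prop :=
  ∀ k l : ℤ, ((k - l : ℤ) : R) * f (k + l) = ((k + l : ℤ) : R) * (f k - f l)

theorem IsSolution.sub [Ring R] {f g : ℤ → R} (hf : IsSolution f) (hg : IsSolution g) :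
    IsSolution (f - g) := by
  intro k l
  simp only [Pi.sub_apply, mul_sub, hf k l, hg k l]
  noncomm_ring

theorem isSolution_linear_add_quadratic [CommRing R] (a b : R) :
    IsSolution fun k : ℤ ↦ a * k + b * (k : R) ^ 2 := by
  intro k l
  push_cast
  ring

theorem IsSolution.apply_neg [Ring R] {f : ℤ → R} (hf : IsSolution f) (n : ℤ) :
    f (-n) = f (n + 1) - ((2 * n + 1 : ℤ) : R) * f 1 := by
  have h := hf (n + 1) (-n)
  rw [show n + 1 - -n = 2 * n + 1 by ring, show n + 1 + -n = 1 by ring, Int.cast_one,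
    one_mul] at h
  rw [h]
  abel

theorem IsSolution.eq_zero_of_apply_one_of_apply_two [CommRing R] [IsDomain R] [CharZero R]
    {h : ℤ → R} (hh : IsSolution h) (h1 : h 1 = 0) (h2 : h 2 = 0) : h = 0 := by
  have hpos : ∀ n ≥ 2, h n = 0 := by
    refine Int.leInduction h2 fun n hn ih ↦ ?_
    have hstep := hh n 1
    rw [ih, h1, sub_zero, mul_zero, mul_eq_zero] at hstep
    exact hstep.resolve_left (Int.cast_ne_zero.mpr (by omega))
  have hnonneg : ∀ n ≥ 1, h n = 0 := by
    intro n hn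
    rcases hn.eq_or_lt with rfl | hlt
    · exact h1
    · exact hpos n hlt
  funext n
  rcases le_or_gt 1 n with hn | hn
  · exact hnonneg n hn
  · rw [← neg_neg n, hh.apply_neg, h1, mul_zero, sub_zero, hnonneg _ (by omega), Pi.zero_apply]

end

theorem stmt_1 {F : Type*} [Field F] [CharZero F] (f : ℤ → F)
    (hf : ∀ k l : ℤ, ((k - l : ℤ) : F) * f (k + l) = ((k + l : ℤ) : F) * (f k - f l)) :
    ∀ k : ℤ, f k = ((k : F) / 2) * (4 * f 1 - f 2) + ((k : F) ^ 2 / 2) * (f 2 - 2 * f 1) := by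
  set g : ℤ → F := fun k ↦ ((k : F) / 2) * (4 * f 1 - f 2) + ((k : F) ^ 2 / 2) * (f 2 - 2 * f 1)
  have hg : IsSolution g := by
    have hg_eq : g = fun k : ℤ ↦ (4 * f 1 - f 2) / 2 * k + (f 2 - 2 * f 1) / 2 * (k : F) ^ 2 := by
      funext k
      ring
    exact hg_eq ▸ isSolution_linear_add_quadratic _ _
  have hfg : f - g = 0 := (IsSolution.sub hf hg).eq_zero_of_apply_one_of_apply_two
    (by simp only [g, Pi.sub_apply]; push_cast; ring)
    (by simp only [g, Pi.sub_apply]; push_cast; ring)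
  exact fun k ↦ sub_eq_zero.mp (congrFun hfg k)
end

section
/- Let F be a field of characteristic zero, A a nontrivial additive abelian group, and ∂ : A → F an additive nondegenerate map. Define, on the free F-module with basis {L(x), I(x) : x ∈ A}, the Lie bracket [L(x),L(y)] = ∂(y−x)L(x+y), [L(x),I(y)] = ∂(y)I(x+y), [I(x),I(y)] = 0. Then the bilinear map ψ₁ defined by ψ₁(I(x),I(y)) = δ_{x+y,0}·∂(y) and ψ₁ = 0 on all other pairs of basis elements is a 2-cocycle on this Lie algebra. -/
/-- The bracket of the Lie algebra `D₁` of generalized differential operators of order at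
most one, on basis elements: `Sum.inl x` stands for `L x = t^x ∂`, `Sum.inr x` for
`I x = t^x`.  The result lives in the free module on the basis. -/
noncomputable def d1Bracket {F A : Type*} [Field F] [AddCommGroup A]
    (d : A →+ F) : (A ⊕ A) → (A ⊕ A) → ((A ⊕ A) →₀ F)
  | Sum.inl x, Sum.inl y => Finsupp.single (Sum.inl (x + y)) (d (y - x))
  | Sum.inl x, Sum.inr y => Finsupp.single (Sum.inr (x + y)) (d y)
  | Sum.inr x, Sum.inl y => Finsupp.single (Sum.inr (y + x)) (- d x)
  | Sum.inr _, Sum.inr _ => 0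

/-- Evaluation of the bilinear extension of a map `ψ` on basis pairs, in its first
argument, against an element of the free module. -/
noncomputable def pairEval {F A : Type*} [Field F] [AddCommGroup A]
    (ψ : (A ⊕ A) → (A ⊕ A) → F) (m : (A ⊕ A) →₀ F) (b : A ⊕ A) : F :=
  m.sum fun b' c => c * ψ b' b

/-!
`ψ₁` vanishes unless both arguments are of type `I`, and a bracket is of type `I` exactly when
one factor is, so only the rotations of `(L x, I y, I z)` contribute to the cocycle sum. There it is
`∂(y) ψ₁(I(x+y), I z) - ∂(z) ψ₁(I(x+z), I y) = δ_{x+y+z,0} (∂(y) ∂(z) - ∂(z) ∂(y)) = 0`.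
-/

section

variable {F A : Type*} [Field F] [AddCommGroup A]

lemma pairEval_single (ψ : (A ⊕ A) → (A ⊕ A) → F) (a b : A ⊕ A) (c : F) :
    pairEval ψ (Finsupp.single a c) b = c * ψ a b := by
  simp [pairEval]

lemma pairEval_zero (ψ : (A ⊕ A) → (A ⊕ A) → F) (b : A ⊕ A) : pairEval ψ 0 b = 0 := by
  simp [pairEval]

open Classical in
lemma antisymm_of_basis (d : A →+ F) (ψ : (A ⊕ A) → (A ⊕ A) → F)
    (hψ : ∀ x y : A, ψ (Sum.inr x) (Sum.inr y) = if x + y = 0 then d y else 0)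
    (hψLL : ∀ x y : A, ψ (Sum.inl x) (Sum.inl y) = 0)
    (hψLI : ∀ x y : A, ψ (Sum.inl x) (Sum.inr y) = 0)
    (hψIL : ∀ x y : A, ψ (Sum.inr x) (Sum.inl y) = 0) (b₁ b₂ : A ⊕ A) :
    ψ b₁ b₂ = - ψ b₂ b₁ := by
  rcases b₁ with x | x <;> rcases b₂ with y | y
  · simp [hψLL]
  · simp [hψLI, hψIL]
  · simp [hψLI, hψIL]
  · rw [hψ, hψ, add_comm y x]
    split_ifs with h
    · rw [eq_neg_of_add_eq_zero_left h, map_neg, neg_neg]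
    · exact neg_zero.symm

open Classical in
lemma cocycle_inl_inr_inr (d : A →+ F) (ψ : (A ⊕ A) → (A ⊕ A) → F)
    (hψ : ∀ x y : A, ψ (Sum.inr x) (Sum.inr y) = if x + y = 0 then d y else 0) (x y z : A) :
    pairEval ψ (d1Bracket d (Sum.inl x) (Sum.inr y)) (Sum.inr z) +
      pairEval ψ (d1Bracket d (Sum.inr y) (Sum.inr z)) (Sum.inl x) +
      pairEval ψ (d1Bracket d (Sum.inr z) (Sum.inl x)) (Sum.inr y) = 0 := by
  have hrot : x + z + y = x + y + z := add_right_comm x z y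
  simp only [d1Bracket, pairEval_single, pairEval_zero, hψ, hrot]
  split_ifs <;> ring

end

open Classical in
theorem stmt_3_general {F : Type*} [Field F]
    {A : Type*} [AddCommGroup A]
    (d : A →+ F)
    (ψ : (A ⊕ A) → (A ⊕ A) → F)
    (hψ : ∀ x y : A, ψ (Sum.inr x) (Sum.inr y) = if x + y = 0 then d y else 0)
    (hψLL : ∀ x y : A, ψ (Sum.inl x) (Sum.inl y) = 0)
    (hψLI : ∀ x y : A, ψ (Sum.inl x) (Sum.inr y) = 0)
    (hψIL : ∀ x y : A, ψ (Sum.inr x) (Sum.inl y) = 0) :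
    (∀ b₁ b₂ : A ⊕ A, ψ b₁ b₂ = - ψ b₂ b₁) ∧
    (∀ b₁ b₂ b₃ : A ⊕ A,
      pairEval ψ (d1Bracket d b₁ b₂) b₃ + pairEval ψ (d1Bracket d b₂ b₃) b₁ +
        pairEval ψ (d1Bracket d b₃ b₁) b₂ = 0) := by
  refine ⟨antisymm_of_basis d ψ hψ hψLL hψLI hψIL, ?_⟩
  have hLII := cocycle_inl_inr_inr d ψ hψ
  rintro (x | x) (y | y) (z | z)
  · simp only [d1Bracket, pairEval_single, hψLL, mul_zero, add_zero]
  · simp only [d1Bracket, pairEval_single, hψLI, hψIL, mul_zero, add_zero]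
  · simp only [d1Bracket, pairEval_single, hψLI, hψIL, mul_zero, add_zero]
  · exact hLII x y z
  · simp only [d1Bracket, pairEval_single, hψLI, hψIL, mul_zero, add_zero]
  · linear_combination hLII y z x
  · linear_combination hLII z x y
  · simp only [d1Bracket, pairEval_zero, add_zero]

open Classical in
/-- The map `ψ₁` with `ψ₁(I x, I y) = δ_{x+y,0} ∂(y)`, zero on other basis pairs, is an
(alternating) 2-cocycle on `D₁`. -/
theorem stmt_3 {F : Type*} [Field F] [CharZero F]
    {A : Type*} [AddCommGroup A] [Nontrivial A]
    (d : A →+ F) (hd : ∀ x : A, d x = 0 → x = 0)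
    (ψ : (A ⊕ A) → (A ⊕ A) → F)
    (hψ : ∀ x y : A, ψ (Sum.inr x) (Sum.inr y) = if x + y = 0 then d y else 0)
    (hψLL : ∀ x y : A, ψ (Sum.inl x) (Sum.inl y) = 0)
    (hψLI : ∀ x y : A, ψ (Sum.inl x) (Sum.inr y) = 0)
    (hψIL : ∀ x y : A, ψ (Sum.inr x) (Sum.inl y) = 0) :
    (∀ b₁ b₂ : A ⊕ A, ψ b₁ b₂ = - ψ b₂ b₁) ∧
    (∀ b₁ b₂ b₃ : A ⊕ A,
      pairEval ψ (d1Bracket d b₁ b₂) b₃ + pairEval ψ (d1Bracket d b₂ b₃) b₁ +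
        pairEval ψ (d1Bracket d b₃ b₁) b₂ = 0) :=
  stmt_3_general d ψ hψ hψLL hψLI hψIL
end

section
/- Let α be a 2-cocycle on the Lie algebra D₁ (basis L(x)=t^x∂, I(x)=t^x, x ∈ A, bracket [L(x),L(y)]=∂(y−x)L(x+y), [L(x),I(y)]=∂(y)I(x+y), [I(x),I(y)]=0, with ∂ nondegenerate additive). Then ∂(x)·α(I(z+x), I(y)) = ∂(y)·α(I(z+y), I(x)) for all x, y, z ∈ A, and consequently α(I(x),I(y)) = 0 whenever x + y ≠ 0. -/
/-!
The cocycle identity for `(L z, I x, I y)`, in which `⁅I x, I y⁆ = 0`, says exactly that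
`α ⁅L z, I x⁆ (I y) = α ⁅L z, I y⁆ (I x)`, which is the first claim. Taking `z = 0` and using that
`α` is alternating gives `∂(x + y) · α (I x) (I y) = 0`, and `∂` vanishes only at `0`.
-/

theorem LieAlgebra.cocycle_lie_apply_eq_of_lie_eq_zero {R D : Type*} [CommRing R] [LieRing D]
    [LieAlgebra R D] (α : D →ₗ[R] D →ₗ[R] R)
    (hα : ∀ u v w : D, α ⁅u, v⁆ w + α ⁅v, w⁆ u + α ⁅w, u⁆ v = 0)
    {a b : D} (hab : ⁅a, b⁆ = 0) (u : D) :
    α ⁅u, a⁆ b = α ⁅u, b⁆ a := by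
  have h := hα u a b
  rw [hab, ← lie_skew b u, map_zero, LinearMap.zero_apply, map_neg, LinearMap.neg_apply] at h
  linear_combination h

theorem stmt_6_general {F : Type*} [Field F]
    {A : Type*} [AddCommGroup A]
    (d : A →+ F) (hd : ∀ x : A, d x = 0 → x = 0)
    {D : Type*} [LieRing D] [LieAlgebra F D]
    (L I : A → D)
    (hLI : ∀ x y : A, ⁅L x, I y⁆ = d y • I (x + y))
    (hII : ∀ x y : A, ⁅I x, I y⁆ = 0)
    (α : D →ₗ[F] D →ₗ[F] F)
    (hAlt : ∀ u : D, α u u = 0)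
    (hCoc : ∀ u v w : D, α ⁅u, v⁆ w + α ⁅v, w⁆ u + α ⁅w, u⁆ v = 0) :
    (∀ x y z : A, d x * α (I (z + x)) (I y) = d y * α (I (z + y)) (I x)) ∧
    (∀ x y : A, x + y ≠ 0 → α (I x) (I y) = 0) := by
  have key : ∀ x y z : A, d x * α (I (z + x)) (I y) = d y * α (I (z + y)) (I x) := by
    intro x y z
    have h := LieAlgebra.cocycle_lie_apply_eq_of_lie_eq_zero α hCoc (hII x y) (L z)
    simpa only [hLI, map_smul, LinearMap.smul_apply, smul_eq_mul] using h
  refine ⟨key, fun x y hxy => ?_⟩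
  have hskew : -α (I x) (I y) = α (I y) (I x) := LinearMap.IsAlt.neg hAlt _ _
  have h : d (x + y) * α (I x) (I y) = 0 := by
    have := key x y 0
    rw [zero_add, zero_add, ← hskew] at this
    rw [map_add]
    linear_combination this
  exact (mul_eq_zero.mp h).resolve_left fun h0 => hxy (hd _ h0)

/-- For any 2-cocycle `α` on the Lie algebra `D₁` (with basis `L x = t^x ∂`, `I x = t^x`),
we have `∂(x)·α(I(z+x), I(y)) = ∂(y)·α(I(z+y), I(x))`, and consequently
`α(I x, I y) = 0` whenever `x + y ≠ 0`. -/
theorem stmt_6 {F : Type*} [Field F] [CharZero F]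
    {A : Type*} [AddCommGroup A]
    (d : A →+ F) (hd : ∀ x : A, d x = 0 → x = 0)
    {D : Type*} [LieRing D] [LieAlgebra F D]
    (L I : A → D)
    (hLL : ∀ x y : A, ⁅L x, L y⁆ = d (y - x) • L (x + y))
    (hLI : ∀ x y : A, ⁅L x, I y⁆ = d y • I (x + y))
    (hII : ∀ x y : A, ⁅I x, I y⁆ = 0)
    (α : D →ₗ[F] D →ₗ[F] F)
    (hAlt : ∀ u : D, α u u = 0)
    (hCoc : ∀ u v w : D, α ⁅u, v⁆ w + α ⁅v, w⁆ u + α ⁅w, u⁆ v = 0) :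
    (∀ x y z : A, d x * α (I (z + x)) (I y) = d y * α (I (z + y)) (I x)) ∧
    (∀ x y : A, x + y ≠ 0 → α (I x) (I y) = 0) :=
  stmt_6_general d hd L I hLI hII α hAlt hCoc
end

section
/- Let α be a 2-cocycle on D₁ (as above). Then for all x, z ∈ A: ∂(x−z)·α(L(x+z), I(−x−z)) = ∂(x+z)·(α(L(x), I(−x)) − α(L(z), I(−z))). -/
/-! The Jacobi-type cocycle identity for the triple `L x, L z, I (-(x + z))` has total degree `0`,
so all three brackets land back in the span of `L (x + z)`, `I (-x)` and `I (-z)`; paired by `α`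
and rewritten with skew-symmetry, it is the claimed relation. -/

section LieAlgebraD1

variable {F : Type*} [Field F] {A : Type*} [AddCommGroup A]
  {D : Type*} [LieRing D] [LieAlgebra F D]

theorem lie_L_I_neg_add (d : A →+ F) (L I : A → D)
    (hLI : ∀ x y : A, ⁅L x, I y⁆ = d y • I (x + y)) (x z : A) :
    ⁅L x, I (-(x + z))⁆ = -d (x + z) • I (-z) := by
  rw [hLI, map_neg, show x + -(x + z) = -z by abel]

theorem cocycle_L_L_I_neg_add (d : A →+ F) (L I : A → D)
    (hLL : ∀ x y : A, ⁅L x, L y⁆ = d (y - x) • L (x + y))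
    (hLI : ∀ x y : A, ⁅L x, I y⁆ = d y • I (x + y))
    (α : D →ₗ[F] D →ₗ[F] F)
    (hCoc : ∀ u v w : D, α ⁅u, v⁆ w + α ⁅v, w⁆ u + α ⁅w, u⁆ v = 0) (x z : A) :
    d (z - x) * α (L (x + z)) (I (-(x + z))) - d (x + z) * α (I (-x)) (L x)
      + d (x + z) * α (I (-z)) (L z) = 0 := by
  have hz := lie_L_I_neg_add d L I hLI z x
  rw [add_comm z x] at hz
  have key := hCoc (L x) (L z) (I (-(x + z)))
  rw [hLL, hz, ← lie_skew, lie_L_I_neg_add d L I hLI] at key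
  simpa only [map_smul, map_neg, LinearMap.smul_apply, LinearMap.neg_apply, smul_eq_mul,
    neg_mul, neg_neg, ← sub_eq_add_neg] using key

end LieAlgebraD1

theorem stmt_9_general {F : Type*} [Field F]
    {A : Type*} [AddCommGroup A]
    (d : A →+ F)
    {D : Type*} [LieRing D] [LieAlgebra F D]
    (L I : A → D)
    (hLL : ∀ x y : A, ⁅L x, L y⁆ = d (y - x) • L (x + y))
    (hLI : ∀ x y : A, ⁅L x, I y⁆ = d y • I (x + y))
    (α : D →ₗ[F] D →ₗ[F] F)
    (hAlt : ∀ u : D, α u u = 0)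
    (hCoc : ∀ u v w : D, α ⁅u, v⁆ w + α ⁅v, w⁆ u + α ⁅w, u⁆ v = 0) :
    ∀ x z : A,
      d (x - z) * α (L (x + z)) (I (-(x + z))) =
        d (x + z) * (α (L x) (I (-x)) - α (L z) (I (-z))) := by
  intro x z
  have key := cocycle_L_L_I_neg_add d L I hLL hLI α hCoc x z
  have hSkew : LinearMap.IsAlt α := hAlt
  rw [← hSkew.neg (L x), ← hSkew.neg (L z), map_sub] at key
  rw [map_sub]
  linear_combination -key

/-- For any 2-cocycle `α` on `D₁`:
`∂(x−z)·α(L(x+z), I(−x−z)) = ∂(x+z)·(α(L x, I(−x)) − α(L z, I(−z)))`. -/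
theorem stmt_9 {F : Type*} [Field F] [CharZero F]
    {A : Type*} [AddCommGroup A]
    (d : A →+ F) (hd : ∀ x : A, d x = 0 → x = 0)
    {D : Type*} [LieRing D] [LieAlgebra F D]
    (L I : A → D)
    (hLL : ∀ x y : A, ⁅L x, L y⁆ = d (y - x) • L (x + y))
    (hLI : ∀ x y : A, ⁅L x, I y⁆ = d y • I (x + y))
    (hII : ∀ x y : A, ⁅I x, I y⁆ = 0)
    (α : D →ₗ[F] D →ₗ[F] F)
    (hAlt : ∀ u : D, α u u = 0)
    (hCoc : ∀ u v w : D, α ⁅u, v⁆ w + α ⁅v, w⁆ u + α ⁅w, u⁆ v = 0) :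
    ∀ x z : A,
      d (x - z) * α (L (x + z)) (I (-(x + z))) =
        d (x + z) * (α (L x) (I (-x)) - α (L z) (I (-z))) :=
  stmt_9_general d L I hLL hLI α hAlt hCoc
end

section
/- The linear map σ₁ on D₁ defined by σ₁(L(x)) = ∂(x)·I(x) and σ₁(I(x)) = 0 for all x ∈ A is a derivation of the Lie algebra D₁. -/
/-!
Both sides of the Leibniz rule are bilinear in `(u, v)`, so it suffices to check it on the
spanning family `L x, I x`. The only nontrivial case is `(L x, L y)`, where it reduces to the
scalar identity `∂(y - x) ∂(x + y) = ∂(y)² - ∂(x)²`, the additivity of `∂` twice over.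
-/

namespace LieAlgebra

variable {R M : Type*} [CommRing R] [LieRing M] [LieAlgebra R M]

theorem leibniz_of_leibniz_on_span {s : Set M} (hs : Submodule.span R s = ⊤) (δ : M →ₗ[R] M)
    (h : ∀ u ∈ s, ∀ v ∈ s, δ ⁅u, v⁆ = ⁅δ u, v⁆ + ⁅u, δ v⁆) (u v : M) :
    δ ⁅u, v⁆ = ⁅δ u, v⁆ + ⁅u, δ v⁆ := by
  let bracket : M →ₗ[R] M →ₗ[R] M := (LieModule.toEnd R M M : M →ₗ[R] Module.End R M)
  have key : bracket.compr₂ δ = bracket ∘ₗ δ + bracket.compl₂ δ :=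
    LinearMap.ext_on hs fun u hu => LinearMap.ext_on hs fun v hv => h u hu v hv
  exact LinearMap.congr_fun₂ key u v

end LieAlgebra

section WittTypeAlgebra

variable {R A M : Type*} [CommRing R] [AddCommGroup A] [LieRing M] [LieAlgebra R M]
  (d : A →+ R) {L I : A → M}
  (hLL : ∀ x y : A, ⁅L x, L y⁆ = d (y - x) • L (x + y))
  (hLI : ∀ x y : A, ⁅L x, I y⁆ = d y • I (x + y))
  (hII : ∀ x y : A, ⁅I x, I y⁆ = 0)
  {σ : M →ₗ[R] M} (hσL : ∀ x : A, σ (L x) = d x • I x) (hσI : ∀ x : A, σ (I x) = 0)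
include hLL hLI hII hσL hσI

theorem leibniz_on_generators :
    ∀ u ∈ Set.range L ∪ Set.range I, ∀ v ∈ Set.range L ∪ Set.range I,
      σ ⁅u, v⁆ = ⁅σ u, v⁆ + ⁅u, σ v⁆ := by
  have hIL (x y : A) : ⁅I x, L y⁆ = -(d x • I (y + x)) := by rw [← lie_skew, hLI]
  rintro u (⟨x, rfl⟩ | ⟨x, rfl⟩) v (⟨y, rfl⟩ | ⟨y, rfl⟩)
  · have scalar : d (y - x) * d (x + y) = -(d x * d x) + d y * d y := by
      simp only [map_sub, map_add]; ring
    rw [hLL, map_smul, hσL, hσL, hσL, smul_lie, lie_smul, hIL, hLI, smul_neg, smul_smul,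
      smul_smul, smul_smul, add_comm y x, ← neg_smul, ← add_smul, scalar]
  · rw [hLI, map_smul, hσI, hσL, hσI, smul_zero, smul_lie, hII, lie_zero, smul_zero, add_zero]
  · rw [hIL, map_neg, map_smul, hσI, hσI, hσL, smul_zero, neg_zero, zero_lie, lie_smul, hII,
      smul_zero, zero_add]
  · rw [hII, map_zero, hσI, hσI, zero_lie, lie_zero, add_zero]

end WittTypeAlgebra

theorem stmt_10_general {F : Type*} [Field F]
    {A : Type*} [AddCommGroup A]
    (d : A →+ F)
    {D : Type*} [LieRing D] [LieAlgebra F D]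
    (L I : A → D)
    (hspan : Submodule.span F (Set.range L ∪ Set.range I) = ⊤)
    (hLL : ∀ x y : A, ⁅L x, L y⁆ = d (y - x) • L (x + y))
    (hLI : ∀ x y : A, ⁅L x, I y⁆ = d y • I (x + y))
    (hII : ∀ x y : A, ⁅I x, I y⁆ = 0)
    (σ : D →ₗ[F] D)
    (hσL : ∀ x : A, σ (L x) = d x • I x)
    (hσI : ∀ x : A, σ (I x) = 0) :
    ∀ u v : D, σ ⁅u, v⁆ = ⁅σ u, v⁆ + ⁅u, σ v⁆ :=
  LieAlgebra.leibniz_of_leibniz_on_span hspan σ (leibniz_on_generators d hLL hLI hII hσL hσI)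

/-- The linear map `σ₁` on `D₁` with `σ₁(L x) = ∂(x)·I(x)` and `σ₁(I x) = 0` is a
derivation of the Lie algebra `D₁`. -/
theorem stmt_10 {F : Type*} [Field F] [CharZero F]
    {A : Type*} [AddCommGroup A]
    (d : A →+ F) (hd : ∀ x : A, d x = 0 → x = 0)
    {D : Type*} [LieRing D] [LieAlgebra F D]
    (L I : A → D)
    (hspan : Submodule.span F (Set.range L ∪ Set.range I) = ⊤)
    (hLL : ∀ x y : A, ⁅L x, L y⁆ = d (y - x) • L (x + y))
    (hLI : ∀ x y : A, ⁅L x, I y⁆ = d y • I (x + y))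
    (hII : ∀ x y : A, ⁅I x, I y⁆ = 0)
    (σ : D →ₗ[F] D)
    (hσL : ∀ x : A, σ (L x) = d x • I x)
    (hσI : ∀ x : A, σ (I x) = 0) :
    ∀ u v : D, σ ⁅u, v⁆ = ⁅σ u, v⁆ + ⁅u, σ v⁆ :=
  stmt_10_general d L I hspan hLL hLI hII σ hσL hσI
end

section
/- Let μ : A → F be an additive map. Then the linear map ξ_μ on D₁ defined by ξ_μ(L(x)) = μ(x)·L(x) and ξ_μ(I(x)) = μ(x)·I(x) for all x ∈ A is a derivation of D₁. Moreover, if μ = k·∂ for some k ∈ F, then ξ_μ equals the inner derivation ad(k·L(0)). -/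
/-!
Giving `L x` and `I x` the weight `x ∈ A`, the bracket of two generators of weights `x` and `y`
is a multiple of a generator of weight `x + y`, so it is an eigenvector of `ξ_μ` with eigenvalue
`μ (x + y) = μ x + μ y`; this is exactly the Leibniz rule on generators, and bilinearity spreads
it to all of `D₁`. For `μ = k • ∂`, the relations `⁅L 0, L x⁆ = ∂ x • L x` and
`⁅L 0, I x⁆ = ∂ x • I x` say that `ad (k • L 0)` agrees with `ξ_μ` on generators.
-/

section LieAlgebra

variable {R M : Type*} [CommRing R] [LieRing M] [LieAlgebra R M]

theorem map_lie_eq_of_eigenvector (ξ : M →ₗ[R] M) {u v : M} {a b : R}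
    (hu : ξ u = a • u) (hv : ξ v = b • v) (huv : ξ ⁅u, v⁆ = (a + b) • ⁅u, v⁆) :
    ξ ⁅u, v⁆ = ⁅ξ u, v⁆ + ⁅u, ξ v⁆ := by
  rw [huv, hu, hv, smul_lie, lie_smul, add_smul]

theorem map_lie_eq_of_span_eq_top {s : Set M} (hs : Submodule.span R s = ⊤) (ξ : M →ₗ[R] M)
    (h : ∀ u ∈ s, ∀ v ∈ s, ξ ⁅u, v⁆ = ⁅ξ u, v⁆ + ⁅u, ξ v⁆) (u v : M) :
    ξ ⁅u, v⁆ = ⁅ξ u, v⁆ + ⁅u, ξ v⁆ := by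
  let B : M →ₗ[R] M →ₗ[R] M := LieModule.toEnd R M M
  have hB : B.compr₂ ξ = B ∘ₗ ξ + B.compl₂ ξ :=
    LinearMap.ext_on hs fun u hu => LinearMap.ext_on hs fun v hv => by simpa [B] using h u hu v hv
  simpa [B] using LinearMap.congr_fun₂ hB u v

end LieAlgebra

section D₁

variable {F A D : Type*} [Field F] [AddCommGroup A] [LieRing D] [LieAlgebra F D]

theorem map_lie_generators_eq_smul (d μ : A →+ F) (L I : A → D)
    (hLL : ∀ x y : A, ⁅L x, L y⁆ = d (y - x) • L (x + y))
    (hLI : ∀ x y : A, ⁅L x, I y⁆ = d y • I (x + y))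
    (hII : ∀ x y : A, ⁅I x, I y⁆ = 0) (ξ : D →ₗ[F] D)
    (hξL : ∀ x : A, ξ (L x) = μ x • L x) (hξI : ∀ x : A, ξ (I x) = μ x • I x)
    {x y : A} {u v : D} (hu : u = L x ∨ u = I x) (hv : v = L y ∨ v = I y) :
    ξ ⁅u, v⁆ = μ (x + y) • ⁅u, v⁆ := by
  rcases hu with rfl | rfl <;> rcases hv with rfl | rfl
  · rw [hLL, map_smul, hξL, smul_comm]
  · rw [hLI, map_smul, hξI, smul_comm]
  · rw [← lie_skew, hLI, map_neg, map_smul, hξI, smul_neg, add_comm y x, smul_comm]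
  · rw [hII, map_zero, smul_zero]

end D₁

theorem stmt_13_general {F : Type*} [Field F]
    {A : Type*} [AddCommGroup A]
    (d : A →+ F)
    {D : Type*} [LieRing D] [LieAlgebra F D]
    (L I : A → D)
    (hspan : Submodule.span F (Set.range L ∪ Set.range I) = ⊤)
    (hLL : ∀ x y : A, ⁅L x, L y⁆ = d (y - x) • L (x + y))
    (hLI : ∀ x y : A, ⁅L x, I y⁆ = d y • I (x + y))
    (hII : ∀ x y : A, ⁅I x, I y⁆ = 0)
    (μ : A →+ F)
    (ξ : D →ₗ[F] D)
    (hξL : ∀ x : A, ξ (L x) = μ x • L x)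
    (hξI : ∀ x : A, ξ (I x) = μ x • I x) :
    (∀ u v : D, ξ ⁅u, v⁆ = ⁅ξ u, v⁆ + ⁅u, ξ v⁆) ∧
    (∀ k : F, (∀ x : A, μ x = k * d x) → ∀ u : D, ξ u = ⁅k • L 0, u⁆) := by
  have weight : ∀ u ∈ Set.range L ∪ Set.range I, ∃ x, (u = L x ∨ u = I x) ∧ ξ u = μ x • u := by
    rintro u (⟨x, rfl⟩ | ⟨x, rfl⟩)
    exacts [⟨x, .inl rfl, hξL x⟩, ⟨x, .inr rfl, hξI x⟩]
  refine ⟨map_lie_eq_of_span_eq_top hspan ξ fun u hu v hv => ?_, fun k hk => ?_⟩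
  · obtain ⟨x, hux, hξu⟩ := weight u hu
    obtain ⟨y, hvy, hξv⟩ := weight v hv
    refine map_lie_eq_of_eigenvector ξ hξu hξv ?_
    rw [← map_add]
    exact map_lie_generators_eq_smul d μ L I hLL hLI hII ξ hξL hξI hux hvy
  · have had : ξ = LieAlgebra.ad F D (k • L 0) := by
      refine LinearMap.ext_on hspan ?_
      rintro u (⟨x, rfl⟩ | ⟨x, rfl⟩)
      · rw [LieAlgebra.ad_apply, hξL, smul_lie, hLL, sub_zero, zero_add, hk, mul_smul]
      · rw [LieAlgebra.ad_apply, hξI, smul_lie, hLI, zero_add, hk, mul_smul]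
    exact fun u => LinearMap.congr_fun had u

/-- For an additive map `μ : A → F`, the linear map `ξ_μ` on `D₁` with
`ξ_μ(L x) = μ(x)·L(x)` and `ξ_μ(I x) = μ(x)·I(x)` is a derivation of `D₁`; moreover, if
`μ = k·∂` for some `k ∈ F`, then `ξ_μ` is the inner derivation `ad(k·L(0)) = ad(k·∂)`. -/
theorem stmt_13 {F : Type*} [Field F] [CharZero F]
    {A : Type*} [AddCommGroup A]
    (d : A →+ F) (hd : ∀ x : A, d x = 0 → x = 0)
    {D : Type*} [LieRing D] [LieAlgebra F D]
    (L I : A → D)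
    (hspan : Submodule.span F (Set.range L ∪ Set.range I) = ⊤)
    (hLL : ∀ x y : A, ⁅L x, L y⁆ = d (y - x) • L (x + y))
    (hLI : ∀ x y : A, ⁅L x, I y⁆ = d y • I (x + y))
    (hII : ∀ x y : A, ⁅I x, I y⁆ = 0)
    (μ : A →+ F)
    (ξ : D →ₗ[F] D)
    (hξL : ∀ x : A, ξ (L x) = μ x • L x)
    (hξI : ∀ x : A, ξ (I x) = μ x • I x) :
    (∀ u v : D, ξ ⁅u, v⁆ = ⁅ξ u, v⁆ + ⁅u, ξ v⁆) ∧
    (∀ k : F, (∀ x : A, μ x = k * d x) → ∀ u : D, ξ u = ⁅k • L 0, u⁆) :=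
  stmt_13_general d L I hspan hLL hLI hII μ ξ hξL hξI
end

section
/- Let χ ∈ Hom(A, F*) be a character of A, and let a, b ∈ F, c ∈ F*. Then the linear map θ on D₁ defined by θ(L(x)) = χ(x)·L(x) + (b·∂(x) + a)·χ(x)·I(x) and θ(I(y)) = c·χ(y)·I(y) is a Lie algebra automorphism of D₁. -/
/-- For a character `χ : A → F*`, `a, b ∈ F`, `c ∈ F*` (taking `ε = 1`), the linear map
`θ` on `D₁` with `θ(L x) = χ(x)·L(x) + (b·∂(x)+a)·χ(x)·I(x)`, `θ(I y) = c·χ(y)·I(y)`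
is a Lie algebra automorphism of `D₁`. -/
theorem stmt_15 {F : Type*} [Field F] [CharZero F]
    {A : Type*} [AddCommGroup A]
    (d : A →+ F) (hd : ∀ x : A, d x = 0 → x = 0)
    {D : Type*} [LieRing D] [LieAlgebra F D]
    (L I : A → D)
    (hspan : Submodule.span F (Set.range L ∪ Set.range I) = ⊤)
    (hInd : LinearIndependent F (fun b : A ⊕ A => Sum.elim L I b))
    (hLL : ∀ x y : A, ⁅L x, L y⁆ = d (y - x) • L (x + y))
    (hLI : ∀ x y : A, ⁅L x, I y⁆ = d y • I (x + y))
    (hII : ∀ x y : A, ⁅I x, I y⁆ = 0)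
    (χ : A → F) (hχ0 : χ 0 = 1) (hχ : ∀ x y : A, χ (x + y) = χ x * χ y)
    (hχne : ∀ x : A, χ x ≠ 0)
    (a b c : F) (hc : c ≠ 0)
    (θ : D →ₗ[F] D)
    (hθL : ∀ x : A, θ (L x) = χ x • L x + ((b * d x + a) * χ x) • I x)
    (hθI : ∀ y : A, θ (I y) = (c * χ y) • I y) :
    Function.Bijective θ ∧ ∀ u v : D, θ ⁅u, v⁆ = ⁅θ u, θ v⁆ := by
  have hIL : ∀ x y : A, ⁅I x, L y⁆ = (-(d x)) • I (x + y) := by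
    intro x y
    rw [← lie_skew, hLI, add_comm y x]; simp
  constructor
  · -- bijectivity
    have hspan' : ⊤ ≤ Submodule.span F (Set.range (Sum.elim L I)) := by
      rw [Set.Sum.elim_range]; exact hspan.ge
    let B : Module.Basis (A ⊕ A) F D := Module.Basis.mk hInd hspan'
    have hBl : ∀ x : A, B (Sum.inl x) = L x := fun x => by simp [B, Module.Basis.mk_apply]
    have hBr : ∀ x : A, B (Sum.inr x) = I x := fun x => by simp [B, Module.Basis.mk_apply]
    let θ' : D →ₗ[F] D := B.constr F fun i =>
      Sum.elim (fun x => (χ x)⁻¹ • L x - ((b * d x + a) / (c * χ x)) • I x)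
        (fun y => (c * χ y)⁻¹ • I y) i
    have hθ'L : ∀ x : A,
        θ' (L x) = (χ x)⁻¹ • L x - ((b * d x + a) / (c * χ x)) • I x := by
      intro x
      have h := B.constr_basis F (fun i =>
        Sum.elim (fun x => (χ x)⁻¹ • L x - ((b * d x + a) / (c * χ x)) • I x)
          (fun y => (c * χ y)⁻¹ • I y) i) (Sum.inl x)
      rw [hBl] at h
      simpa [θ'] using h
    have hθ'I : ∀ y : A, θ' (I y) = (c * χ y)⁻¹ • I y := by
      intro y
      have h := B.constr_basis F (fun i =>
        Sum.elim (fun x => (χ x)⁻¹ • L x - ((b * d x + a) / (c * χ x)) • I x)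
          (fun y => (c * χ y)⁻¹ • I y) i) (Sum.inr y)
      rw [hBr] at h
      simpa [θ'] using h
    have hleft : θ'.comp θ = LinearMap.id := by
      apply B.ext
      rintro (x | x)
      · simp only [LinearMap.comp_apply, LinearMap.id_apply, hBl, hθL, map_add,
          map_smul, hθ'L, hθ'I, smul_sub, smul_smul]
        match_scalars <;> field_simp [hχne x, hc] <;> ring
      · simp only [LinearMap.comp_apply, LinearMap.id_apply, hBr, hθI,
          map_smul, hθ'I, smul_smul]
        match_scalars
        field_simp [hχne x, hc]
    have hright : θ.comp θ' = LinearMap.id := by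
      apply B.ext
      rintro (x | x)
      · simp only [LinearMap.comp_apply, LinearMap.id_apply, hBl, hθ'L, map_sub,
          map_smul, hθL, hθI, smul_add, smul_smul]
        match_scalars <;> field_simp [hχne x, hc] <;> ring
      · simp only [LinearMap.comp_apply, LinearMap.id_apply, hBr, hθ'I,
          map_smul, hθI, smul_smul]
        match_scalars
        field_simp [hχne x, hc]
    have hl : Function.LeftInverse θ' θ := fun v => by
      have := congrArg (fun f => f v) hleft; simpa using this
    have hr : Function.RightInverse θ' θ := fun v => by
      have := congrArg (fun f => f v) hright; simpa using this
    exact ⟨hl.injective, hr.surjective⟩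
  · -- bracket preservation
    have base : ∀ u ∈ Set.range L ∪ Set.range I, ∀ v ∈ Set.range L ∪ Set.range I,
        θ ⁅u, v⁆ = ⁅θ u, θ v⁆ := by
      rintro u (⟨x, rfl⟩ | ⟨x, rfl⟩) v (⟨y, rfl⟩ | ⟨y, rfl⟩)
      · rw [hLL, map_smul, hθL, hθL x, hθL y]
        simp only [lie_add, add_lie, smul_lie, lie_smul, hLL, hLI, hIL, hII,
          smul_zero, add_zero, smul_smul, smul_add]
        simp only [map_sub, map_add, hχ]
        module
      · rw [hLI, map_smul, hθI, hθL x, hθI y]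
        simp only [add_lie, smul_lie, lie_smul, hLI, hII, smul_zero, add_zero,
          smul_smul]
        simp only [hχ]
        module
      · rw [hIL, map_smul, hθI, hθI x, hθL y]
        simp only [lie_add, smul_lie, lie_smul, hIL, hII, zero_smul, smul_zero,
          add_zero, smul_smul]
        simp only [hχ]
        module
      · rw [hII, map_zero, hθI x, hθI y, smul_lie, lie_smul, hII, smul_zero,
          smul_zero]
    intro u v
    have hu : u ∈ Submodule.span F (Set.range L ∪ Set.range I) := by
      rw [hspan]; trivial
    have hv : v ∈ Submodule.span F (Set.range L ∪ Set.range I) := by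
      rw [hspan]; trivial
    clear hd
    induction hu using Submodule.span_induction with
    | mem u hu =>
      induction hv using Submodule.span_induction with
      | mem v hv => exact base u hu v hv
      | zero => simp
      | add v w _ _ ih1 ih2 => simp only [lie_add, map_add, ih1, ih2]
      | smul r v _ ih => simp only [lie_smul, map_smul, ih]
    | zero => simp
    | add u w _ _ ih1 ih2 => simp only [add_lie, map_add, ih1, ih2]
    | smul r u _ ih => simp only [smul_lie, map_smul, ih]
end

section
/- Let θᵢ = θ(χᵢ, aᵢ, bᵢ, cᵢ) (i = 1, 2) be automorphisms of D₁ of the form θ(L(x)) = χ(x)L(x) + (b∂(x)+a)χ(x)I(x), θ(I(y)) = cχ(y)I(y). Then their composition satisfies θ₁ ∘ θ₂ = θ(χ₁χ₂, a₁ + c₁a₂, b₁ + c₁b₂, c₁c₂). -/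
section ThetaMap

variable {R A M : Type*} [CommRing R] [AddCommGroup M] [Module R M]

/-- `θ(χ, a, b, c)`, read only on the vectors `L x`, `I y`. -/
def IsThetaMap (d : A → R) (L I : A → M) (χ : A → R) (a b c : R) (θ : M →ₗ[R] M) : Prop :=
  (∀ x, θ (L x) = χ x • L x + ((b * d x + a) * χ x) • I x) ∧
    ∀ y, θ (I y) = (c * χ y) • I y

theorem IsThetaMap.comp {d : A → R} {L I : A → M} {χ₁ χ₂ : A → R} {a₁ a₂ b₁ b₂ c₁ c₂ : R}
    {θ₁ θ₂ : M →ₗ[R] M} (h₁ : IsThetaMap d L I χ₁ a₁ b₁ c₁ θ₁)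
    (h₂ : IsThetaMap d L I χ₂ a₂ b₂ c₂ θ₂) :
    IsThetaMap d L I (χ₁ * χ₂) (a₁ + c₁ * a₂) (b₁ + c₁ * b₂) (c₁ * c₂) (θ₁ ∘ₗ θ₂) := by
  obtain ⟨h₁L, h₁I⟩ := h₁
  obtain ⟨h₂L, h₂I⟩ := h₂
  refine ⟨fun x => ?_, fun y => ?_⟩
  · simp only [LinearMap.comp_apply, h₂L, map_add, map_smul, h₁L, h₁I, smul_add, smul_smul,
      Pi.mul_apply]
    rw [add_assoc, ← add_smul]
    ring_nf
  · simp only [LinearMap.comp_apply, h₂I, map_smul, h₁I, smul_smul, Pi.mul_apply]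
    ring_nf

end ThetaMap

theorem stmt_16_general {F : Type*} [Field F]
    {A : Type*} [AddCommGroup A]
    (d : A →+ F)
    {D : Type*} [LieRing D] [LieAlgebra F D]
    (L I : A → D)
    (χ₁ χ₂ : A → F)
    (a₁ a₂ b₁ b₂ c₁ c₂ : F)
    (θ₁ θ₂ : D →ₗ[F] D)
    (hθ₁L : ∀ x : A, θ₁ (L x) = χ₁ x • L x + ((b₁ * d x + a₁) * χ₁ x) • I x)
    (hθ₁I : ∀ y : A, θ₁ (I y) = (c₁ * χ₁ y) • I y)
    (hθ₂L : ∀ x : A, θ₂ (L x) = χ₂ x • L x + ((b₂ * d x + a₂) * χ₂ x) • I x)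
    (hθ₂I : ∀ y : A, θ₂ (I y) = (c₂ * χ₂ y) • I y) :
    (∀ x : A, (θ₁ ∘ₗ θ₂) (L x) =
      (χ₁ x * χ₂ x) • L x + (((b₁ + c₁ * b₂) * d x + (a₁ + c₁ * a₂)) * (χ₁ x * χ₂ x)) • I x) ∧
    (∀ y : A, (θ₁ ∘ₗ θ₂) (I y) = ((c₁ * c₂) * (χ₁ y * χ₂ y)) • I y) :=
  IsThetaMap.comp (d := d) ⟨hθ₁L, hθ₁I⟩ ⟨hθ₂L, hθ₂I⟩

/-- Composition law for automorphisms of `D₁` of the form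
`θ(χ,a,b,c) : L x ↦ χ(x)L(x) + (b∂(x)+a)χ(x)I(x), I y ↦ cχ(y)I(y)`:
`θ(χ₁,a₁,b₁,c₁) ∘ θ(χ₂,a₂,b₂,c₂) = θ(χ₁χ₂, a₁+c₁a₂, b₁+c₁b₂, c₁c₂)`. -/
theorem stmt_16 {F : Type*} [Field F] [CharZero F]
    {A : Type*} [AddCommGroup A]
    (d : A →+ F) (hd : ∀ x : A, d x = 0 → x = 0)
    {D : Type*} [LieRing D] [LieAlgebra F D]
    (L I : A → D)
    (hLL : ∀ x y : A, ⁅L x, L y⁆ = d (y - x) • L (x + y))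
    (hLI : ∀ x y : A, ⁅L x, I y⁆ = d y • I (x + y))
    (hII : ∀ x y : A, ⁅I x, I y⁆ = 0)
    (χ₁ χ₂ : A → F)
    (hχ₁0 : χ₁ 0 = 1) (hχ₁ : ∀ x y : A, χ₁ (x + y) = χ₁ x * χ₁ y) (hχ₁ne : ∀ x, χ₁ x ≠ 0)
    (hχ₂0 : χ₂ 0 = 1) (hχ₂ : ∀ x y : A, χ₂ (x + y) = χ₂ x * χ₂ y) (hχ₂ne : ∀ x, χ₂ x ≠ 0)
    (a₁ a₂ b₁ b₂ c₁ c₂ : F) (hc₁ : c₁ ≠ 0) (hc₂ : c₂ ≠ 0)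
    (θ₁ θ₂ : D →ₗ[F] D)
    (hθ₁L : ∀ x : A, θ₁ (L x) = χ₁ x • L x + ((b₁ * d x + a₁) * χ₁ x) • I x)
    (hθ₁I : ∀ y : A, θ₁ (I y) = (c₁ * χ₁ y) • I y)
    (hθ₂L : ∀ x : A, θ₂ (L x) = χ₂ x • L x + ((b₂ * d x + a₂) * χ₂ x) • I x)
    (hθ₂I : ∀ y : A, θ₂ (I y) = (c₂ * χ₂ y) • I y) :
    (∀ x : A, (θ₁ ∘ₗ θ₂) (L x) =
      (χ₁ x * χ₂ x) • L x + (((b₁ + c₁ * b₂) * d x + (a₁ + c₁ * a₂)) * (χ₁ x * χ₂ x)) • I x) ∧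
    (∀ y : A, (θ₁ ∘ₗ θ₂) (I y) = ((c₁ * c₂) * (χ₁ y * χ₂ y)) • I y) :=
  stmt_16_general d L I χ₁ χ₂ a₁ a₂ b₁ b₂ c₁ c₂ θ₁ θ₂ hθ₁L hθ₁I hθ₂L hθ₂I
end
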